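/- arXiv:1301.6042 — 2 statements merged into one kernel-verified Lean document; each statement's English description precedes it below -/
import Mathlib

section
/- Monomial relations among characters of ℂⁿ pass to their unitary parts: let α₁, …, α_m: ℂⁿ → ℂˣ be continuous group homomorphisms and let β₁, …, β_m: ℂⁿ → ℂˣ be unitary continuous group homomorphisms such that α_i·β_i⁻¹ is holomorphic for each i. Then for all tuples of integers (k₁, …, k_m) and (l₁, …, l_m): if ∏_{i=1}^m α_i^{k_i} = ∏_{i=1}^m α_i^{l_i} pointwise on ℂⁿ, then ∏_{i=1}^m β_i^{k_i} = ∏_{i=1}^m β_i^{l_i} pointwise on ℂⁿ. -/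
/-!
Put `d = k - l`, `γᵢ = αᵢ βᵢ⁻¹`, `g = ∏ γᵢ^{dᵢ}` and `u = ∏ βᵢ^{dᵢ}`. The relation says
`g · u = 1`, so the entire function `g` has modulus `1` and is constant by Liouville;
hence so is `u`, and `u 0 = 1` because the `βᵢ` are characters.
-/

open Finset

theorem Finset.prod_zpow_eq_prod_zpow_iff {ι G : Type*} [CommGroup G] (s : Finset ι)
    (a : ι → G) (k l : ι → ℤ) :
    ∏ i ∈ s, a i ^ k i = ∏ i ∈ s, a i ^ l i ↔ ∏ i ∈ s, a i ^ (k i - l i) = 1 := by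
  simp only [zpow_sub, prod_mul_distrib, prod_inv_distrib, mul_inv_eq_one]

section UnitsValued

variable {𝕜 E ι : Type*} [NormedAddCommGroup E]

theorem Differentiable.units_prod_zpow [NontriviallyNormedField 𝕜] [NormedSpace 𝕜 E]
    {f : ι → E → 𝕜ˣ} (hf : ∀ i, Differentiable 𝕜 fun z => (f i z : 𝕜)) (s : Finset ι)
    (d : ι → ℤ) : Differentiable 𝕜 fun z => ((∏ i ∈ s, f i z ^ d i : 𝕜ˣ) : 𝕜) := by
  classical
  simp only [Units.coe_prod, Units.val_zpow_eq_zpow_val]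
  intro x
  exact (HasFDerivAt.finsetProd fun i _ =>
    ((hf i).zpow (Or.inl fun z => (f i z).ne_zero) x).hasFDerivAt).differentiableAt

theorem norm_units_prod_zpow_eq_one [NormedField 𝕜] {u : ι → 𝕜ˣ}
    (hu : ∀ i, ‖(u i : 𝕜)‖ = 1) (s : Finset ι) (d : ι → ℤ) :
    ‖((∏ i ∈ s, u i ^ d i : 𝕜ˣ) : 𝕜)‖ = 1 := by
  simp [Units.coe_prod, Units.val_zpow_eq_zpow_val, norm_prod, hu]

end UnitsValued

theorem Units.eq_one_of_differentiable_mul_eq_one {E : Type*} [NormedAddCommGroup E]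
    [NormedSpace ℂ E] {g u : E → ℂˣ} (hg : Differentiable ℂ fun z => (g z : ℂ))
    (hu : ∀ z, ‖(u z : ℂ)‖ = 1) (hgu : ∀ z, g z * u z = 1) (hu0 : u 0 = 1) (z : E) :
    u z = 1 := by
  have hg_eq_inv : ∀ z, g z = (u z)⁻¹ := fun z => eq_inv_of_mul_eq_one_left (hgu z)
  have hg_bdd : Bornology.IsBounded (Set.range fun z => (g z : ℂ)) := by
    refine (Metric.isBounded_iff_subset_closedBall 0).2 ⟨1, ?_⟩
    rintro _ ⟨w, rfl⟩
    simp [hg_eq_inv w, hu w]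
  have hg_const := hg.apply_eq_apply_of_bounded hg_bdd z 0
  rw [← hu0, ← inv_inj, ← hg_eq_inv, ← hg_eq_inv]
  exact Units.ext hg_const

theorem stmt_7_general {n m : ℕ} (α β : Fin m → (Fin n → ℂ) → ℂˣ)
    (hβ_hom : ∀ i, ∀ x y : Fin n → ℂ, β i (x + y) = β i x * β i y)
    (hβ_unit : ∀ i z, ‖(β i z : ℂ)‖ = 1)
    (hhol : ∀ i, Differentiable ℂ fun z => ((α i z * (β i z)⁻¹ : ℂˣ) : ℂ)) :
    ∀ k l : Fin m → ℤ,
      (∀ z : Fin n → ℂ, ∏ i, α i z ^ k i = ∏ i, α i z ^ l i) →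
      ∀ z : Fin n → ℂ, ∏ i, β i z ^ k i = ∏ i, β i z ^ l i := by
  intro k l hkl
  simp only [prod_zpow_eq_prod_zpow_iff] at hkl ⊢
  have hβ0 (i : Fin m) : β i 0 = 1 := by
    simpa using hβ_hom i 0 0
  refine Units.eq_one_of_differentiable_mul_eq_one
    (g := fun z => ∏ i, (α i z * (β i z)⁻¹) ^ (k i - l i))
    (u := fun z => ∏ i, β i z ^ (k i - l i))
    (Differentiable.units_prod_zpow hhol _ _)
    (fun z => norm_units_prod_zpow_eq_one (hβ_unit · z) _ _) (fun z => ?_) (by simp [hβ0])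
  rw [← hkl z, ← prod_mul_distrib]
  simp [← mul_zpow]

/-- Monomial relations among characters of `ℂⁿ` pass to their unitary parts: if
`α₁, …, α_m : ℂⁿ → ℂˣ` are continuous homomorphisms and `β₁, …, β_m` are unitary
continuous homomorphisms such that each `αᵢ·βᵢ⁻¹` is holomorphic, then for all integer
tuples `(k₁, …, k_m)`, `(l₁, …, l_m)`: if `∏ αᵢ^{kᵢ} = ∏ αᵢ^{lᵢ}` pointwise on `ℂⁿ`,
then `∏ βᵢ^{kᵢ} = ∏ βᵢ^{lᵢ}` pointwise on `ℂⁿ`. -/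
theorem stmt_7 {n m : ℕ} (α β : Fin m → (Fin n → ℂ) → ℂˣ)
    (hα_hom : ∀ i, ∀ x y : Fin n → ℂ, α i (x + y) = α i x * α i y)
    (hβ_hom : ∀ i, ∀ x y : Fin n → ℂ, β i (x + y) = β i x * β i y)
    (hα_cont : ∀ i, Continuous fun z => (α i z : ℂ))
    (hβ_cont : ∀ i, Continuous fun z => (β i z : ℂ))
    (hβ_unit : ∀ i z, ‖(β i z : ℂ)‖ = 1)
    (hhol : ∀ i, Differentiable ℂ fun z => ((α i z * (β i z)⁻¹ : ℂˣ) : ℂ)) :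
    ∀ k l : Fin m → ℤ,
      (∀ z : Fin n → ℂ, ∏ i, α i z ^ k i = ∏ i, α i z ^ l i) →
      ∀ z : Fin n → ℂ, ∏ i, β i z ^ k i = ∏ i, β i z ^ l i :=
  stmt_7_general α β hβ_hom hβ_unit hhol
end

section
/- The modified bracket is a Lie bracket: let g be a Lie algebra over a field K and let θ: g → End(g) be a K-linear map such that (i) θ(x) is a derivation of g for every x ∈ g; (ii) θ(x) ∘ θ(y) = θ(y) ∘ θ(x) for all x, y ∈ g; (iii) θ([x, y]) = 0 for all x, y ∈ g; and (iv) θ(θ(x)(y)) = 0 for all x, y ∈ g. Then the operation [x, y]_θ := [x, y] − θ(x)(y) + θ(y)(x) is a Lie bracket (bilinear, alternating, satisfying the Jacobi identity) on the underlying vector space of g, and moreover every θ(x) is also a derivation of the new Lie algebra (g, [·,·]_θ). -/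
/-- The modified bracket `[x, y]_θ := [x, y] − θ(x)(y) + θ(y)(x)`. -/
def modBracket {K g : Type*} [Field K] [LieRing g] [LieAlgebra K g]
    (θ : g →ₗ[K] Module.End K g) (x y : g) : g :=
  ⁅x, y⁆ - θ x y + θ y x

section

variable {K g : Type*} [Field K] [LieRing g] [LieAlgebra K g] (θ : g →ₗ[K] Module.End K g)

theorem modBracket_smul_add_left (a : K) (x x' y : g) :
    modBracket θ (a • x + x') y = a • modBracket θ x y + modBracket θ x' y := by
  simp only [modBracket, add_lie, smul_lie, map_add, map_smul, LinearMap.add_apply,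
    LinearMap.smul_apply, smul_add, smul_sub]
  abel

theorem modBracket_smul_add_right (a : K) (x y y' : g) :
    modBracket θ x (a • y + y') = a • modBracket θ x y + modBracket θ x y' := by
  simp only [modBracket, lie_add, lie_smul, map_add, map_smul, LinearMap.add_apply,
    LinearMap.smul_apply, smul_add, smul_sub]
  abel

theorem modBracket_self (x : g) : modBracket θ x x = 0 := by
  simp [modBracket]

theorem modBracket_antisymm (x y : g) : modBracket θ x y = -modBracket θ y x := by
  simp only [modBracket, ← lie_skew x y]
  abel

theorem theta_modBracket (hbrk : ∀ x y : g, θ ⁅x, y⁆ = 0) (himg : ∀ x y : g, θ (θ x y) = 0)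
    (y z : g) : θ (modBracket θ y z) = 0 := by
  simp [modBracket, hbrk, himg]

theorem modBracket_of_theta_eq_zero {w : g} (hw : θ w = 0) (x : g) :
    modBracket θ x w = ⁅x, w⁆ - θ x w := by
  simp [modBracket, hw]

theorem theta_apply_modBracket (hder : ∀ x y z : g, θ x ⁅y, z⁆ = ⁅θ x y, z⁆ + ⁅y, θ x z⁆)
    (hcomm : ∀ x y : g, θ x ∘ₗ θ y = θ y ∘ₗ θ x) (himg : ∀ x y : g, θ (θ x y) = 0)
    (x y z : g) :
    θ x (modBracket θ y z) = modBracket θ (θ x y) z + modBracket θ y (θ x z) := by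
  have comm : ∀ a b c : g, θ a (θ b c) = θ b (θ a c) := fun a b c =>
    LinearMap.congr_fun (hcomm a b) c
  simp only [modBracket, map_sub, map_add, hder, himg, LinearMap.zero_apply, comm x z y,
    comm x y z]
  abel

theorem modBracket_jacobi (hder : ∀ x y z : g, θ x ⁅y, z⁆ = ⁅θ x y, z⁆ + ⁅y, θ x z⁆)
    (hcomm : ∀ x y : g, θ x ∘ₗ θ y = θ y ∘ₗ θ x)
    (hbrk : ∀ x y : g, θ ⁅x, y⁆ = 0) (himg : ∀ x y : g, θ (θ x y) = 0) (x y z : g) :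
    modBracket θ x (modBracket θ y z) + modBracket θ y (modBracket θ z x) +
      modBracket θ z (modBracket θ x y) = 0 := by
  -- `θ` kills `[b, c]_θ`, so the outer modified bracket is `[a, ·] - θ a`; after expanding,
  -- the Jacobi identity of `g`, antisymmetry and `θ a θ b = θ b θ a` cancel everything.
  have outer : ∀ a b c : g, modBracket θ a (modBracket θ b c) =
      ⁅a, ⁅b, c⁆⁆ - ⁅a, θ b c⁆ + ⁅a, θ c b⁆ -
        (⁅θ a b, c⁆ + ⁅b, θ a c⁆ - θ a (θ b c) + θ a (θ c b)) := fun a b c => by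
    rw [modBracket_of_theta_eq_zero θ (theta_modBracket θ hbrk himg b c), modBracket]
    simp only [lie_add, lie_sub, map_add, map_sub, hder]
  have comm : ∀ a b c : g, θ a (θ b c) = θ b (θ a c) := fun a b c =>
    LinearMap.congr_fun (hcomm a b) c
  have skew : ∀ a b : g, ⁅a, b⁆ = -⁅b, a⁆ := fun a b => (lie_skew a b).symm
  rw [outer, outer, outer, comm x z y, comm y x z, comm z y x,
    skew (θ x y) z, skew (θ y z) x, skew (θ z x) y, skew y (θ x z), skew z (θ y x),
    skew x (θ z y), ← lie_jacobi x y z]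
  abel

end

/-- The modified bracket is a Lie bracket: if `θ : g → End(g)` is linear, its values are
derivations which pairwise commute, and `θ` vanishes on brackets and on the image of every
`θ(x)`, then `[x, y]_θ := [x, y] − θ(x)(y) + θ(y)(x)` is bilinear, alternating and satisfies
the Jacobi identity, and every `θ(x)` is a derivation of the new Lie algebra. -/
theorem stmt_8 {K g : Type*} [Field K] [LieRing g] [LieAlgebra K g]
    (θ : g →ₗ[K] Module.End K g)
    (hder : ∀ x y z : g, θ x ⁅y, z⁆ = ⁅θ x y, z⁆ + ⁅y, θ x z⁆)
    (hcomm : ∀ x y : g, θ x ∘ₗ θ y = θ y ∘ₗ θ x)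
    (hbrk : ∀ x y : g, θ ⁅x, y⁆ = 0)
    (himg : ∀ x y : g, θ (θ x y) = 0) :
    (∀ (a : K) (x x' y : g),
      modBracket θ (a • x + x') y = a • modBracket θ x y + modBracket θ x' y) ∧
    (∀ (a : K) (x y y' : g),
      modBracket θ x (a • y + y') = a • modBracket θ x y + modBracket θ x y') ∧
    (∀ x : g, modBracket θ x x = 0) ∧
    (∀ x y : g, modBracket θ x y = -modBracket θ y x) ∧
    (∀ x y z : g,
      modBracket θ x (modBracket θ y z) + modBracket θ y (modBracket θ z x) +
        modBracket θ z (modBracket θ x y) = 0) ∧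
    (∀ x y z : g,
      θ x (modBracket θ y z) = modBracket θ (θ x y) z + modBracket θ y (θ x z)) :=
  ⟨modBracket_smul_add_left θ, modBracket_smul_add_right θ, modBracket_self θ,
    modBracket_antisymm θ, modBracket_jacobi θ hder hcomm hbrk himg,
    theta_apply_modBracket θ hder hcomm himg⟩
end
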